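/- Let t ∈ V(T₂) \ {z} and v_f ∈ V(P_T) \ {s}. If ddist_{G−v_f}(s,t) ≥ jdist_{G−v_f}(s,t), then jdist_{G−v_f}(s,t) = dist_{G−v_f}(s,z) + dist_T(z,t). -/

import Mathlib

/-!
Write `P_T = P₁ ++ v_f :: P₂`. A jumping path `R` meets `P₂` at some vertex `u` before its end.
Following `R` to `u` and then `P_T` to `z` is an `s`–`z` walk in `G − v_f`, and the rest of `R`
is no shorter than the tree path from `u` to `t`, which runs through `z`: this gives `≥`.
Conversely, take an `s`–`z` path `Q` in `G − v_f` and its last vertex `x` on `P₁`. Replace the part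
of `Q` before `x` by the (shortest) tree path to `x`, follow `Q` to `z` and the tree path on to
`t`, and shorten the resulting walk to a path. This path satisfies (C1), so it is jumping or
departing, and either way its length bounds `jdist` because `jdist ≤ ddist`.
-/

open scoped ENNReal

/-- A directed graph on vertex type `V` with real edge weights. -/
structure WDigraph (V : Type) where
  Adj : V → V → Prop
  w : V → V → ℝ

namespace WDigraph

variable {V : Type}

/-- The weighted length of a walk, given as the list of its vertices:
the sum of the weights of consecutive pairs. -/
def len (G : WDigraph V) (l : List V) : ℝ :=
  ((l.zip l.tail).map fun p => G.w p.1 p.2).sum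

/-- `l` is a (simple) path from `u` to `v` in `G`: a nonempty list of pairwise distinct
vertices, consecutively joined by edges of `G`, starting at `u` and ending at `v`. -/
def IsPathFrom (G : WDigraph V) (u v : V) (l : List V) : Prop :=
  l.Chain' G.Adj ∧ l.Nodup ∧ l.head? = some u ∧ l.getLast? = some v

/-- The distance from `u` to `v` in `G`: the minimum length of a path from `u` to `v`,
equal to `∞` if no such path exists. -/
noncomputable def dist (G : WDigraph V) (u v : V) : ℝ≥0∞ :=
  ⨅ (l : List V) (_ : G.IsPathFrom u v l), ENNReal.ofReal (G.len l)

/-- `G − x`: the graph obtained from `G` by deleting the vertex `x`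
and all edges incident to it. -/
def deleteVert (G : WDigraph V) (x : V) : WDigraph V where
  Adj a b := G.Adj a b ∧ a ≠ x ∧ b ≠ x
  w := G.w

/-- `G[Ψ(U)]`: the subgraph of `G` consisting of the edges with at least one endpoint
in `U` (and their endpoints). -/
def psiSub (G : WDigraph V) (U : Set V) : WDigraph V where
  Adj a b := G.Adj a b ∧ (a ∈ U ∨ b ∈ U)
  w := G.w

/-- All edge weights of `G` are positive. -/
def PosWeights (G : WDigraph V) : Prop := ∀ a b, G.Adj a b → 0 < G.w a b

end WDigraph

/-- Every prefix of the path `P` (starting at `s`) is a shortest path in `G`. -/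
def ShortestPrefixes {V : Type} (G : WDigraph V) (s : V) (P : List V) : Prop :=
  ∀ k < P.length, ENNReal.ofReal (G.len (P.take (k + 1))) = G.dist s (P.getD k s)
/-- `R` is a *departing* `s`–`t` path avoiding the failed vertex `v_f = P[f]`:
an `s`–`t` path in `G − P[f]` such that
(C1) the vertices of `R` lying on `P[0, f−1]` form a prefix of `R`, and
(C2) no vertex of `R` other than possibly its last lies on `P[f+1, p−1]`. -/
def IsDeparting {V : Type} (G : WDigraph V) (P : List V) (f : ℕ) (s t : V)
    (R : List V) : Prop :=
  (G.deleteVert (P.getD f s)).IsPathFrom s t R ∧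
  (∃ k, (∀ a ∈ R.take k, a ∈ P.take f) ∧ (∀ a ∈ R.drop k, a ∉ P.take f)) ∧
  (∀ a ∈ R.dropLast, a ∉ P.drop (f + 1))

/-- `R` is a *jumping* `s`–`t` path avoiding the failed vertex `v_f = P[f]`:
an `s`–`t` path in `G − P[f]` satisfying (C1) and
(C3) some vertex of `R` other than its last lies on `P[f+1, p−1]`. -/
def IsJumping {V : Type} (G : WDigraph V) (P : List V) (f : ℕ) (s t : V)
    (R : List V) : Prop :=
  (G.deleteVert (P.getD f s)).IsPathFrom s t R ∧
  (∃ k, (∀ a ∈ R.take k, a ∈ P.take f) ∧ (∀ a ∈ R.drop k, a ∉ P.take f)) ∧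
  (∃ a ∈ R.dropLast, a ∈ P.drop (f + 1))

/-- `ddist`: the minimum length of a departing `s`–`t` path avoiding `P[f]`
(`∞` if none exists). -/
noncomputable def ddist {V : Type} (G : WDigraph V) (P : List V) (f : ℕ)
    (s t : V) : ℝ≥0∞ :=
  ⨅ (R : List V) (_ : IsDeparting G P f s t R), ENNReal.ofReal (G.len R)

/-- `jdist`: the minimum length of a jumping `s`–`t` path avoiding `P[f]`
(`∞` if none exists). -/
noncomputable def jdist {V : Type} (G : WDigraph V) (P : List V) (f : ℕ)
    (s t : V) : ℝ≥0∞ :=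
  ⨅ (R : List V) (_ : IsJumping G P f s t R), ENNReal.ofReal (G.len R)
/-- `T` is a shortest path tree of `G` rooted at `s`, encoded by its vertex set `VT`
and the function `tp` assigning to each vertex of `T` the tree path from `s` to it:
`T` spans exactly the vertices reachable from `s`, each tree path is a path of `G` of
length `dist_G(s, ·)`, and tree paths are prefix-consistent (for every `u` on the tree
path to `v`, the tree path to `u` is a prefix of the tree path to `v`). -/
structure IsSPT {V : Type} (G : WDigraph V) (s : V) (VT : Set V)
    (tp : V → List V) : Prop where
  root_mem : s ∈ VT
  root_path : tp s = [s]
  path : ∀ v ∈ VT, G.IsPathFrom s v (tp v)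
  shortest : ∀ v ∈ VT, ENNReal.ofReal (G.len (tp v)) = G.dist s v
  closed : ∀ v ∈ VT, ∀ u ∈ tp v, u ∈ VT ∧ tp u <+: tp v
  spans : ∀ v, G.dist s v ≠ ⊤ → v ∈ VT

namespace List

variable {α : Type*}

theorem exists_eq_append_cons_append_cons_of_not_nodup :
    ∀ {l : List α}, ¬ l.Nodup → ∃ A x B C, l = A ++ x :: (B ++ x :: C)
  | [], h => absurd nodup_nil h
  | a :: l, h => by
    by_cases ha : a ∈ l
    · obtain ⟨B, C, rfl⟩ := append_of_mem ha
      exact ⟨[], a, B, C, rfl⟩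
    · obtain ⟨A, x, B, C, rfl⟩ :=
        exists_eq_append_cons_append_cons_of_not_nodup fun hl => h (nodup_cons.2 ⟨ha, hl⟩)
      exact ⟨a :: A, x, B, C, rfl⟩

theorem exists_eq_append_cons_of_last_mem {p : α → Prop} :
    ∀ {l : List α}, (∃ a ∈ l, p a) → ∃ A x B, l = A ++ x :: B ∧ p x ∧ ∀ b ∈ B, ¬ p b
  | [], h => by simp at h
  | a :: l, h => by
    by_cases hl : ∃ b ∈ l, p b
    · obtain ⟨A, x, B, rfl, hx, hB⟩ := exists_eq_append_cons_of_last_mem hl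
      exact ⟨a :: A, x, B, rfl, hx, hB⟩
    · obtain ⟨b, hb, hpb⟩ := h
      rcases mem_cons.1 hb with rfl | hb
      · exact ⟨[], b, l, rfl, hpb, fun c hc hpc => hl ⟨c, hc, hpc⟩⟩
      · exact absurd ⟨b, hb, hpb⟩ hl

theorem getD_length_append_cons (A B : List α) (x d : α) : (A ++ x :: B).getD A.length d = x := by
  simp

theorem drop_length_sub_one_append {l : List α} {x : α} (h : l.getLast? = some x) (r : List α) :
    (l ++ r).drop (l.length - 1) = x :: r := by
  rw [← dropLast_append_getLast? x h]
  simp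

end List

namespace WDigraph

variable {V : Type} {G : WDigraph V}

def NonnegWeights (G : WDigraph V) : Prop := ∀ a b, G.Adj a b → 0 ≤ G.w a b

theorem PosWeights.nonnegWeights (hw : G.PosWeights) : G.NonnegWeights :=
  fun a b h => (hw a b h).le

theorem NonnegWeights.deleteVert (hw : G.NonnegWeights) (x : V) : (G.deleteVert x).NonnegWeights :=
  fun a b h => hw a b h.1

@[simp]
theorem len_deleteVert (x : V) (l : List V) : (G.deleteVert x).len l = G.len l := rfl

theorem len_append_cons (A : List V) (x : V) (B : List V) :
    G.len (A ++ x :: B) = G.len (A ++ [x]) + G.len (x :: B) := by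
  induction A with
  | nil => simp [len]
  | cons a A ih =>
    cases A with
    | nil => simp [len]
    | cons b A =>
      simp_all only [len, List.cons_append, List.tail_cons, List.zip_cons_cons, List.map_cons,
        List.sum_cons]
      ring

theorem len_append_of_getLast? {l : List V} {x : V} (h : l.getLast? = some x) (r : List V) :
    G.len (l ++ r) = G.len l + G.len (x :: r) := by
  rw [← List.dropLast_append_getLast? x h, List.append_assoc, List.singleton_append,
    len_append_cons]

theorem len_nonneg (hw : G.NonnegWeights) : ∀ {l : List V}, l.IsChain G.Adj → 0 ≤ G.len l
  | [], _ | [_], _ => le_rfl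
  | a :: b :: l, h => by
    rw [List.isChain_cons_cons] at h
    have := len_nonneg hw h.2
    simp only [len, List.tail_cons, List.zip_cons_cons, List.map_cons, List.sum_cons] at this ⊢
    linarith [hw a b h.1]

def IsWalkFrom (G : WDigraph V) (u v : V) (l : List V) : Prop :=
  l.IsChain G.Adj ∧ l.head? = some u ∧ l.getLast? = some v

theorem IsPathFrom.isWalkFrom {u v : V} {l : List V} (h : G.IsPathFrom u v l) :
    G.IsWalkFrom u v l :=
  ⟨h.1, h.2.2⟩

theorem isWalkFrom_append_cons_iff {u w x : V} {A B : List V} :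
    G.IsWalkFrom u w (A ++ x :: B) ↔ G.IsWalkFrom u x (A ++ [x]) ∧ G.IsWalkFrom x w (x :: B) := by
  rw [IsWalkFrom, IsWalkFrom, IsWalkFrom, List.isChain_split]
  simp only [List.head?_append, List.head?_cons,
    List.getLast?_append_of_ne_nil _ (List.cons_ne_nil x B), List.getLast?_singleton,
    List.getLast?_append, true_and]
  tauto

theorem isWalkFrom_append_iff {u v w : V} {l r : List V} (h : l.getLast? = some v) :
    G.IsWalkFrom u w (l ++ r) ↔ G.IsWalkFrom u v l ∧ G.IsWalkFrom v w (v :: r) := by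
  rw [← List.dropLast_append_getLast? v h, List.append_assoc, List.singleton_append,
    isWalkFrom_append_cons_iff]

theorem IsWalkFrom.deleteVert {u v x : V} {l : List V} (h : G.IsWalkFrom u v l) (hx : x ∉ l) :
    (G.deleteVert x).IsWalkFrom u v l :=
  ⟨h.1.imp_of_mem_imp fun _ _ ha hb hab => ⟨hab, ne_of_mem_of_not_mem ha hx,
    ne_of_mem_of_not_mem hb hx⟩, h.2⟩

theorem IsWalkFrom.of_deleteVert {u v x : V} {l : List V} (h : (G.deleteVert x).IsWalkFrom u v l) :
    G.IsWalkFrom u v l :=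
  ⟨h.1.imp fun _ _ hab => hab.1, h.2⟩

theorem IsWalkFrom.ne_of_deleteVert {u v x : V} {l : List V}
    (h : (G.deleteVert x).IsWalkFrom u v l) (huv : u ≠ v) : v ≠ x := by
  obtain ⟨l, rfl⟩ : ∃ l', l = l' ++ [v] :=
    ⟨l.dropLast, (List.dropLast_append_getLast? v h.2.2).symm⟩
  rcases List.eq_nil_or_concat l with rfl | ⟨l, a, rfl⟩
  · exact absurd (Option.some.inj h.2.1).symm huv
  · have h' := (isWalkFrom_append_cons_iff.1 (by simpa using h)).2
    exact (List.isChain_pair.1 h'.1).2.2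

theorem IsPathFrom.deleteVert {u v x : V} {l : List V} (h : G.IsPathFrom u v l) (hx : x ∉ l) :
    (G.deleteVert x).IsPathFrom u v l :=
  ⟨(h.isWalkFrom.deleteVert hx).1, h.2⟩

theorem IsPathFrom.of_append_cons_left {u w x : V} {A B : List V}
    (h : G.IsPathFrom u w (A ++ x :: B)) : G.IsPathFrom u x (A ++ [x]) :=
  ⟨(isWalkFrom_append_cons_iff.1 h.isWalkFrom).1.1, h.2.1.sublist (by simp),
    (isWalkFrom_append_cons_iff.1 h.isWalkFrom).1.2⟩

theorem IsPathFrom.append_cons {u w x : V} {A B : List V} (h₁ : G.IsPathFrom u x (A ++ [x]))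
    (h₂ : G.IsPathFrom x w (x :: B)) (hAB : ∀ a ∈ A, a ∉ B) : G.IsPathFrom u w (A ++ x :: B) := by
  have hw := isWalkFrom_append_cons_iff.2 ⟨h₁.isWalkFrom, h₂.isWalkFrom⟩
  refine ⟨hw.1, ?_, hw.2⟩
  have hA := h₁.2.1
  have hB := h₂.2.1
  simp only [List.nodup_append, List.nodup_cons, List.mem_cons] at hA hB ⊢
  grind

theorem IsWalkFrom.exists_isPathFrom (hw : G.NonnegWeights) {u v : V} :
    ∀ {l : List V}, G.IsWalkFrom u v l → ∃ p, G.IsPathFrom u v p ∧ p ⊆ l ∧ G.len p ≤ G.len l := by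
  intro l h
  induction hn : l.length using Nat.strong_induction_on generalizing l with
  | _ n ih =>
  by_cases hl : l.Nodup
  · exact ⟨l, ⟨h.1, hl, h.2⟩, List.Subset.refl l, le_rfl⟩
  obtain ⟨A, x, B, C, rfl⟩ := List.exists_eq_append_cons_append_cons_of_not_nodup hl
  obtain ⟨hA, hxBC⟩ := isWalkFrom_append_cons_iff.1 h
  rw [← List.cons_append] at hxBC
  obtain ⟨hxB, hC⟩ := isWalkFrom_append_cons_iff.1 hxBC
  obtain ⟨p, hp, hpsub, hplen⟩ := ih _ (by simp [← hn])
    (isWalkFrom_append_cons_iff.2 ⟨hA, hC⟩) rfl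
  refine ⟨p, hp, fun a ha => ?_, hplen.trans ?_⟩
  · have := hpsub ha
    simp only [List.mem_append, List.mem_cons] at this ⊢
    tauto
  have := len_nonneg hw hxB.1
  rw [len_append_cons A x C, len_append_cons A x (B ++ x :: C), ← List.cons_append,
    len_append_cons (x :: B) x C]
  linarith

theorem dist_le_ofReal_len (hw : G.NonnegWeights) {u v : V} {l : List V}
    (h : G.IsWalkFrom u v l) : G.dist u v ≤ ENNReal.ofReal (G.len l) := by
  obtain ⟨p, hp, -, hlen⟩ := h.exists_isPathFrom hw
  exact (iInf₂_le p hp).trans (ENNReal.ofReal_le_ofReal hlen)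

theorem len_le_of_ofReal_len_eq_dist (hw : G.NonnegWeights) {u v : V} {p l : List V}
    (hp : ENNReal.ofReal (G.len p) = G.dist u v) (hl : G.IsWalkFrom u v l) :
    G.len p ≤ G.len l :=
  (ENNReal.ofReal_le_ofReal_iff (len_nonneg hw hl.1)).1 (hp ▸ dist_le_ofReal_len hw hl)

theorem len_cons_le_of_ofReal_len_eq_dist (hw : G.NonnegWeights) {s t x : V} {A B W : List V}
    (hQ : G.IsWalkFrom s t (A ++ x :: B))
    (hQd : ENNReal.ofReal (G.len (A ++ x :: B)) = G.dist s t) (hW : G.IsWalkFrom x t W) :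
    G.len (x :: B) ≤ G.len W := by
  obtain ⟨W, rfl⟩ : ∃ W', W = x :: W' := ⟨W.tail, (List.eq_cons_of_mem_head? hW.2.1)⟩
  have := len_le_of_ofReal_len_eq_dist hw hQd
    (isWalkFrom_append_cons_iff.2 ⟨(isWalkFrom_append_cons_iff.1 hQ).1, hW⟩)
  rw [len_append_cons A x B, len_append_cons A x W] at this
  linarith

theorem IsPathFrom.exists_isPathFrom_append_cons (hw : G.NonnegWeights) {s x t : V}
    {C B : List V} (hC : G.IsPathFrom s x (C ++ [x])) (hB : G.IsWalkFrom x t (x :: B))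
    (hCB : ∀ a ∈ C, a ∉ B) :
    ∃ R, G.IsPathFrom s t (C ++ x :: R) ∧ R ⊆ B ∧ G.len (C ++ x :: R) ≤ G.len (C ++ x :: B) := by
  obtain ⟨p, hp, hpsub, hplen⟩ := hB.exists_isPathFrom hw
  obtain ⟨R, rfl⟩ : ∃ R, p = x :: R := ⟨p.tail, List.eq_cons_of_mem_head? hp.2.2.1⟩
  have hRB : R ⊆ B := fun a ha => by
    have hax : a ≠ x := fun h => (List.nodup_cons.1 hp.2.1).1 (h ▸ ha)
    simpa [hax] using hpsub (List.mem_cons_of_mem x ha)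
  refine ⟨R, hC.append_cons hp fun a ha haR => hCB a ha (hRB haR), hRB, ?_⟩
  rw [len_append_cons C x R, len_append_cons C x B]
  linarith

end WDigraph

open WDigraph

section JumpingPaths

variable {V : Type} {G : WDigraph V} {s v z t : V} {P₁ P₂ rest : List V}

theorem ShortestPrefixes.ofReal_len_eq_dist {x : V} {A B : List V} (h : ShortestPrefixes G s (A ++ x :: B)) :
    ENNReal.ofReal (G.len (A ++ [x])) = G.dist s x := by
  simpa [List.take_append, List.take_of_length_le] using h A.length (by simp)

theorem jdist_le_ofReal_len_of_append {P R₁ R₂ : List V} {f : ℕ}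
    (hdd : jdist G P f s t ≤ ddist G P f s t)
    (hR : (G.deleteVert (P.getD f s)).IsPathFrom s t (R₁ ++ R₂))
    (h₁ : ∀ a ∈ R₁, a ∈ P.take f) (h₂ : ∀ a ∈ R₂, a ∉ P.take f) :
    jdist G P f s t ≤ ENNReal.ofReal (G.len (R₁ ++ R₂)) := by
  have hC1 : ∃ k, (∀ a ∈ (R₁ ++ R₂).take k, a ∈ P.take f) ∧
      ∀ a ∈ (R₁ ++ R₂).drop k, a ∉ P.take f :=
    ⟨R₁.length, by simpa using h₁, by simpa using h₂⟩
  by_cases hjump : ∃ a ∈ (R₁ ++ R₂).dropLast, a ∈ P.drop (f + 1)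
  · exact iInf₂_le _ ⟨hR, hC1, hjump⟩
  · exact hdd.trans (iInf₂_le _ ⟨hR, hC1, fun a ha haP => hjump ⟨a, ha, haP⟩⟩)

theorem dist_deleteVert_add_len_le_jdist (hw : G.NonnegWeights)
    (hP : G.IsPathFrom s z (P₁ ++ v :: P₂)) (hQ : G.IsWalkFrom s t (P₁ ++ v :: P₂ ++ rest))
    (hQd : ENNReal.ofReal (G.len (P₁ ++ v :: P₂ ++ rest)) = G.dist s t) :
    (G.deleteVert v).dist s z + ENNReal.ofReal (G.len (z :: rest)) ≤
      jdist G (P₁ ++ v :: P₂) P₁.length s t := by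
  refine le_iInf₂ fun R ⟨hR, _, u, huR, huP⟩ => ?_
  rw [List.getD_length_append_cons] at hR
  rw [List.drop_length_add_append, List.drop_one, List.tail_cons] at huP
  obtain ⟨R₁, R₂, rfl⟩ := List.append_of_mem (List.dropLast_subset _ huR)
  obtain ⟨W₁, W₂, rfl⟩ := List.append_of_mem huP
  obtain ⟨hR₁, hR₂⟩ := isWalkFrom_append_cons_iff.1 hR.isWalkFrom
  have hPu : P₁ ++ v :: (W₁ ++ u :: W₂) = (P₁ ++ v :: W₁) ++ u :: W₂ := by simp
  have hW := (isWalkFrom_append_cons_iff.1 (hPu ▸ hP.isWalkFrom)).2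
  have hvW : v ∉ u :: W₂ := by
    have := hP.2.1
    simp only [List.nodup_append, List.nodup_cons, List.mem_append, List.mem_cons] at this
    grind
  have hdetour : (G.deleteVert v).IsWalkFrom s z (R₁ ++ u :: W₂) :=
    isWalkFrom_append_cons_iff.2 ⟨hR₁, hW.deleteVert hvW⟩
  have htree : G.len (u :: (W₂ ++ rest)) ≤ G.len (u :: R₂) := by
    rw [hPu, List.append_assoc] at hQ hQd
    exact len_cons_le_of_ofReal_len_eq_dist hw hQ hQd hR₂.of_deleteVert
  have hD := ((isWalkFrom_append_iff hP.2.2.2).1 hQ).2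
  calc (G.deleteVert v).dist s z + ENNReal.ofReal (G.len (z :: rest))
      ≤ ENNReal.ofReal (G.len (R₁ ++ u :: W₂)) + ENNReal.ofReal (G.len (z :: rest)) :=
        by gcongr; exact dist_le_ofReal_len (hw.deleteVert v) hdetour
    _ = ENNReal.ofReal (G.len (R₁ ++ u :: W₂ ++ rest)) := by
        rw [len_append_of_getLast? hdetour.2.2,
          ENNReal.ofReal_add (len_nonneg hw hdetour.of_deleteVert.1) (len_nonneg hw hD.1)]
    _ ≤ ENNReal.ofReal (G.len (R₁ ++ u :: R₂)) := by
        refine ENNReal.ofReal_le_ofReal ?_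
        rw [List.append_assoc, List.cons_append, len_append_cons R₁ u (W₂ ++ rest),
          len_append_cons R₁ u R₂]
        linarith

theorem exists_isPathFrom_deleteVert_of_isWalkFrom (hw : G.NonnegWeights)
    (hP : G.IsPathFrom s z (P₁ ++ v :: P₂)) (hshort : ShortestPrefixes G s (P₁ ++ v :: P₂))
    (hvP₁ : v ∉ P₁) (hsP₁ : s ∈ P₁) (hD : (G.deleteVert v).IsWalkFrom z t (z :: rest))
    (hrest : ∀ a ∈ rest, a ∉ P₁) {Q : List V} (hQ : (G.deleteVert v).IsWalkFrom s z Q) :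
    ∃ R₁ R₂, (G.deleteVert v).IsPathFrom s t (R₁ ++ R₂) ∧ (∀ a ∈ R₁, a ∈ P₁) ∧
      (∀ a ∈ R₂, a ∉ P₁) ∧ G.len (R₁ ++ R₂) ≤ G.len Q + G.len (z :: rest) := by
  obtain ⟨A, x, B, rfl, hxP₁, hB⟩ := List.exists_eq_append_cons_of_last_mem (p := (· ∈ P₁))
    ⟨s, List.mem_of_mem_head? hQ.2.1, hsP₁⟩
  obtain ⟨hA, hxB⟩ := isWalkFrom_append_cons_iff.1 hQ
  have hW : (G.deleteVert v).IsWalkFrom x t (x :: (B ++ rest)) := by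
    rw [← List.cons_append]
    exact (isWalkFrom_append_iff hxB.2.2).2 ⟨hxB, hD⟩
  have hBrest : ∀ a ∈ B ++ rest, a ∉ P₁ := fun a ha => by
    rcases List.mem_append.1 ha with h | h
    exacts [hB a h, hrest a h]
  obtain ⟨C, C', rfl⟩ := List.append_of_mem hxP₁
  have hCx : (G.deleteVert v).IsPathFrom s x (C ++ [x]) := by
    refine (IsPathFrom.of_append_cons_left (B := C' ++ v :: P₂) (by simpa using hP)).deleteVert
      fun h => hvP₁ ?_
    simp only [List.mem_append, List.mem_cons] at h ⊢
    tauto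
  obtain ⟨R, hR, hRsub, hRlen⟩ := hCx.exists_isPathFrom_append_cons (hw.deleteVert v) hW
    fun a ha haB => hBrest a haB (List.mem_append_left _ ha)
  have hprefix : G.len (C ++ [x]) ≤ G.len (A ++ [x]) :=
    len_le_of_ofReal_len_eq_dist hw
      (ShortestPrefixes.ofReal_len_eq_dist (B := C' ++ v :: P₂) (by simpa using hshort))
      hA.of_deleteVert
  refine ⟨C ++ [x], R, by simpa using hR, fun a ha => ?_, fun a ha => hBrest a (hRsub ha), ?_⟩
  · simp only [List.mem_append, List.mem_cons] at ha ⊢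
    tauto
  · rw [len_deleteVert, len_deleteVert, len_append_cons C x R, len_append_cons C x (B ++ rest),
      ← List.cons_append, len_append_of_getLast? hxB.2.2] at hRlen
    rw [List.append_assoc, List.singleton_append, len_append_cons C, len_append_cons A]
    linarith

theorem jdist_le_dist_deleteVert_add_len (hw : G.NonnegWeights)
    (hP : G.IsPathFrom s z (P₁ ++ v :: P₂)) (hP₁ : P₁ ≠ [])
    (hshort : ShortestPrefixes G s (P₁ ++ v :: P₂))
    (hQ : G.IsPathFrom s t (P₁ ++ v :: P₂ ++ rest))
    (hdd : jdist G (P₁ ++ v :: P₂) P₁.length s t ≤ ddist G (P₁ ++ v :: P₂) P₁.length s t) :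
    jdist G (P₁ ++ v :: P₂) P₁.length s t ≤
      (G.deleteVert v).dist s z + ENNReal.ofReal (G.len (z :: rest)) := by
  have hnodup := hQ.2.1
  simp only [List.nodup_append, List.nodup_cons, List.mem_append, List.mem_cons] at hnodup
  have hvP₁ : v ∉ P₁ := fun h => hnodup.1.2.2 v h v (Or.inl rfl) rfl
  have hrest : ∀ a ∈ rest, a ∉ P₁ ∧ a ≠ v := fun a ha =>
    ⟨fun h => hnodup.2.2 a (Or.inl h) a ha rfl, fun h => hnodup.2.2 a (Or.inr (Or.inl h)) a ha rfl⟩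
  have hsP₁ : s ∈ P₁ :=
    List.mem_of_mem_head? ((List.head?_append_of_ne_nil _ hP₁).symm.trans hP.2.2.1)
  have hzP₁ : z ∉ P₁ := by
    have hz : z ∈ v :: P₂ := List.mem_of_getLast? <|
      (List.getLast?_append_of_ne_nil P₁ (List.cons_ne_nil v P₂)).symm.trans hP.2.2.2
    exact fun h => hnodup.1.2.2 z h z (by simpa using hz) rfl
  rw [WDigraph.dist, ENNReal.iInf_add]
  refine le_iInf fun Q => ?_
  rw [ENNReal.iInf_add]
  refine le_iInf fun hQ' => ?_
  have hzv : z ≠ v := hQ'.isWalkFrom.ne_of_deleteVert (ne_of_mem_of_not_mem hsP₁ hzP₁)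
  have hD : (G.deleteVert v).IsWalkFrom z t (z :: rest) :=
    ((isWalkFrom_append_iff hP.2.2.2).1 hQ.isWalkFrom).2.deleteVert
      (by simpa [hzv.symm] using fun h => (hrest v h).2 rfl)
  obtain ⟨R₁, R₂, hR, hR₁, hR₂, hlen⟩ := exists_isPathFrom_deleteVert_of_isWalkFrom hw hP hshort
    hvP₁ hsP₁ hD (fun a ha => (hrest a ha).1) hQ'.isWalkFrom
  calc jdist G _ _ s t ≤ ENNReal.ofReal (G.len (R₁ ++ R₂)) :=
        jdist_le_ofReal_len_of_append hdd (by rwa [List.getD_length_append_cons])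
          (by rwa [List.take_left]) (by rwa [List.take_left])
    _ ≤ ENNReal.ofReal (G.len Q + G.len (z :: rest)) := ENNReal.ofReal_le_ofReal hlen
    _ ≤ _ := ENNReal.ofReal_add_le

end JumpingPaths

/-- Here `S2 = V(T₂)`, `tp z = P_T`, the failed vertex is `v_f = (tp z)[f]`, and `dist_T(z,t)` is
the length of the suffix of `tp t` starting at `z`. -/
theorem jdist_eq_dist_add_treeDist_general {V : Type} (G : WDigraph V)
    (hw : G.PosWeights) (s : V) (VT : Set V) (tp : V → List V)
    (hT : IsSPT G s VT tp)
    (z : V) (hz : z ∈ VT) (S2 : Set V) (hS2 : S2 ⊆ VT)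
    (hdesc : ∀ v ∈ S2, tp z <+: tp v)
    (hshort : ShortestPrefixes G s (tp z))
    (t : V) (ht : t ∈ S2)
    (f : ℕ) (hf1 : 1 ≤ f) (hf2 : f < (tp z).length)
    (hdd : jdist G (tp z) f s t ≤ ddist G (tp z) f s t) :
    jdist G (tp z) f s t =
      (G.deleteVert ((tp z).getD f s)).dist s z +
        ENNReal.ofReal (G.len ((tp t).drop ((tp z).length - 1))) := by
  obtain ⟨rest, hrest⟩ := hdesc t ht
  have hP := hT.path z hz
  have hQ : G.IsPathFrom s t (tp z ++ rest) := hrest ▸ hT.path t (hS2 ht)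
  have hQd : ENNReal.ofReal (G.len (tp z ++ rest)) = G.dist s t :=
    hrest ▸ hT.shortest t (hS2 ht)
  rw [← hrest, List.drop_length_sub_one_append hP.2.2.2]
  generalize tp z = P at hP hQ hQd hshort hdd hf1 hf2 ⊢
  obtain ⟨P₁, v, P₂, rfl, rfl⟩ : ∃ P₁ v P₂, P = P₁ ++ v :: P₂ ∧ P₁.length = f :=
    ⟨P.take f, P[f], P.drop (f + 1), by simp, by simp; omega⟩
  rw [List.getD_length_append_cons]
  exact le_antisymm
    (jdist_le_dist_deleteVert_add_len hw.nonnegWeights hP (List.ne_nil_of_length_pos hf1) hshort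
      hQ hdd)
    (dist_deleteVert_add_len_le_jdist hw.nonnegWeights hP hQ.isWalkFrom hQd)

/-- **Handling jumping paths.** `T` is a shortest path tree of `G` rooted at `s`
(given by `VT`, `tp`), `z ∈ V(T)`, and `S2 = V(T₂)` is the vertex set of the subtree of
`T` rooted at `z` (so the tree path `P_T = tp z` is a prefix of the tree path of every
vertex of `T₂`).  Let `t ∈ V(T₂) \ {z}` and let `v_f = P_T[f] ∈ V(P_T) \ {s}` be the
failed vertex.  If `ddist_{G−v_f}(s,t) ≥ jdist_{G−v_f}(s,t)`, then
`jdist_{G−v_f}(s,t) = dist_{G−v_f}(s,z) + dist_T(z,t)`, where `dist_T(z,t)` is the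
length of the tree path from `z` to `t` (the suffix of `tp t` starting at `z`). -/
theorem jdist_eq_dist_add_treeDist {V : Type} [Fintype V] (G : WDigraph V)
    (hw : G.PosWeights) (s : V) (VT : Set V) (tp : V → List V)
    (hT : IsSPT G s VT tp)
    (z : V) (hz : z ∈ VT) (S2 : Set V) (hzS2 : z ∈ S2) (hS2 : S2 ⊆ VT)
    (hdesc : ∀ v ∈ S2, tp z <+: tp v)
    (hshort : ShortestPrefixes G s (tp z))
    (t : V) (ht : t ∈ S2) (htz : t ≠ z)
    (f : ℕ) (hf1 : 1 ≤ f) (hf2 : f < (tp z).length)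
    (hdd : jdist G (tp z) f s t ≤ ddist G (tp z) f s t) :
    jdist G (tp z) f s t =
      (G.deleteVert ((tp z).getD f s)).dist s z +
        ENNReal.ofReal (G.len ((tp t).drop ((tp z).length - 1))) :=
  jdist_eq_dist_add_treeDist_general G hw s VT tp hT z hz S2 hS2 hdesc hshort t ht f hf1 hf2 hdd
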